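/- Let A, B, C, D, E, F be points in ℝ³ and define D(P,Q,R,S) := det(Q − P, R − P, S − P). If D(A,B,C,E)·D(C,D,E,F) + D(A,C,E,F)·D(B,C,D,E) = 0 and D(B,C,E,F) ≠ 0, then D(A,C,D,E)·D(A,B,D,F) = 0 implies D(A,B,D,E)·D(A,C,D,F) = D(A,B,C,D)·D(A,D,E,F). -/
import Mathlib


/-- Six times the signed volume of the tetrahedron `P Q R S`. -/
noncomputable def Dvol (P Q R S : Fin 3 → ℝ) : ℝ :=
  (Matrix.of ![Q - P, R - P, S - P]).det

private lemma dvol_expand (P Q R S : Fin 3 → ℝ) :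
    Dvol P Q R S =
      (Q 0 - P 0) * ((R 1 - P 1) * (S 2 - P 2) - (R 2 - P 2) * (S 1 - P 1))
      - (Q 1 - P 1) * ((R 0 - P 0) * (S 2 - P 2) - (R 2 - P 2) * (S 0 - P 0))
      + (Q 2 - P 2) * ((R 0 - P 0) * (S 1 - P 1) - (R 1 - P 1) * (S 0 - P 0)) := by
  simp [Dvol, Matrix.det_fin_three, Pi.sub_apply]
  ring

private lemma gp1 (A B C D E F : Fin 3 → ℝ) :
    Dvol A C D E * Dvol B C E F =
      Dvol A B C E * Dvol C D E F + Dvol A C E F * Dvol B C D E := by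
  simp only [dvol_expand]; ring

private lemma gp2 (A B C D E F : Fin 3 → ℝ) :
    Dvol A B D E * Dvol A C D F =
      Dvol A B C D * Dvol A D E F + Dvol A B D F * Dvol A C D E := by
  simp only [dvol_expand]; ring

theorem stmt13 (A B C D E F : Fin 3 → ℝ)
    (h1 : Dvol A B C E * Dvol C D E F + Dvol A C E F * Dvol B C D E = 0)
    (h2 : Dvol B C E F ≠ 0)
    (h3 : Dvol A C D E * Dvol A B D F = 0) :
    Dvol A B D E * Dvol A C D F = Dvol A B C D * Dvol A D E F := by
  have hACDE : Dvol A C D E = 0 := by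
    have := gp1 A B C D E F
    rw [h1] at this
    exact (mul_eq_zero.mp this).resolve_right h2
  have := gp2 A B C D E F
  rw [hACDE, mul_zero, add_zero] at this
  exact this
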